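/- arXiv:2107.04595 — 3 statements merged into one kernel-verified Lean document; each statement's English description precedes it below -/
import Mathlib

section
/- Let m, k ≥ 1, n = m + k, and let α_ν : ℝⁿ × ℝᵐ × ℝ → ℝ (ν = 1,…,k) be C² functions of (q₁,…,qₙ, q̇₁,…,q̇_m, t). Set ᾱ_ν := Σ_{i=1}^m q̇_i ∂α_ν/∂q̇_i, and define B_i^ν := Σ_{r=1}^m (∂²α_ν/(∂q̇_i∂q_r) q̇_r + ∂²α_ν/(∂q̇_i∂q̇_r) q̈_r) − ∂α_ν/∂q_i + Σ_{μ=1}^k (∂²α_ν/(∂q̇_i∂q_{m+μ}) α_μ − (∂α_μ/∂q̇_i)(∂α_ν/∂q_{m+μ})) + ∂²α_ν/(∂q̇_i∂t) and B̄_ν := Σ_{r=1}^m q̇_r (∂ᾱ_ν/∂q_r − ∂α_ν/∂q_r) + Σ_{μ=1}^k (α_μ ∂ᾱ_ν/∂q_{m+μ} − ᾱ_μ ∂α_ν/∂q_{m+μ}) + Σ_{r=1}^m q̈_r (∂ᾱ_ν/∂q̇_r − ∂α_ν/∂q̇_r) + ∂ᾱ_ν/∂t. Then along every C² admissible curve q(t)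 (i.e. satisfying q̇_{m+ν} = α_ν along the curve), one has Σ_{i=1}^m B_i^ν q̇_i = B̄_ν for every ν = 1,…,k and every t. -/
open scoped BigOperators

noncomputable section

/-- A phase point: positions `q ∈ ℝⁿ`, independent velocities `v ∈ ℝᵐ`, and time `t`. -/
abbrev PhasePt (n m : ℕ) : Type := (Fin n → ℝ) × (Fin m → ℝ) × ℝ

/-- Partial derivative of `f : PhasePt n m → ℝ` with respect to the coordinate `q i`. -/
def pq {n m : ℕ} (f : PhasePt n m → ℝ) (i : Fin n) (p : PhasePt n m) : ℝ :=
  fderiv ℝ f p (Pi.single i 1, 0, 0)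

/-- Partial derivative with respect to the independent velocity `q̇ r`. -/
def pv {n m : ℕ} (f : PhasePt n m → ℝ) (r : Fin m) (p : PhasePt n m) : ℝ :=
  fderiv ℝ f p (0, Pi.single r 1, 0)

/-- Partial derivative with respect to time. -/
def ptime {n m : ℕ} (f : PhasePt n m → ℝ) (p : PhasePt n m) : ℝ :=
  fderiv ℝ f p (0, 0, 1)

variable {m k : ℕ}

/-- The independent velocities `q̇ 1, …, q̇ m` along a curve. -/
def ivel (q : ℝ → Fin (m + k) → ℝ) (t : ℝ) : Fin m → ℝ :=
  fun i => deriv q t (Fin.castAdd k i)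

/-- The second derivatives `q̈ r` of the independent coordinates along a curve. -/
def iacc (q : ℝ → Fin (m + k) → ℝ) (t : ℝ) : Fin m → ℝ :=
  fun i => deriv (deriv q) t (Fin.castAdd k i)

/-- The phase-space lift `(q(t), q̇ ₁(t),…,q̇ _m(t), t)` of a curve. -/
def plift (q : ℝ → Fin (m + k) → ℝ) (t : ℝ) : PhasePt (m + k) m :=
  (q t, ivel q t, t)

/-- A curve is admissible when the constraints `q̇ (m+ν) = α ν` hold along it. -/
def Admissible (α : Fin k → PhasePt (m + k) m → ℝ) (q : ℝ → Fin (m + k) → ℝ) : Prop :=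
  ∀ (t : ℝ) (ν : Fin k), deriv q t (Fin.natAdd m ν) = α ν (plift q t)

/-- `ᾱ ν := ∑ i q̇ i ∂α ν/∂q̇ i`. -/
def abar (α : Fin k → PhasePt (m + k) m → ℝ) (ν : Fin k) (p : PhasePt (m + k) m) : ℝ :=
  ∑ i : Fin m, p.2.1 i * pv (α ν) i p

/-- The Voronec coefficient `B i ν` (formula (11) of the paper), along a curve. -/
def Bcoef (α : Fin k → PhasePt (m + k) m → ℝ) (q : ℝ → Fin (m + k) → ℝ)
    (t : ℝ) (ν : Fin k) (i : Fin m) : ℝ :=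
  (∑ r : Fin m, (pq (pv (α ν) i) (Fin.castAdd k r) (plift q t) * ivel q t r
      + pv (pv (α ν) i) r (plift q t) * iacc q t r))
  - pq (α ν) (Fin.castAdd k i) (plift q t)
  + (∑ μ : Fin k, (pq (pv (α ν) i) (Fin.natAdd m μ) (plift q t) * α μ (plift q t)
      - pv (α μ) i (plift q t) * pq (α ν) (Fin.natAdd m μ) (plift q t)))
  + ptime (pv (α ν) i) (plift q t)

/-- The coefficient `B̄ ν` (formula (15) of the paper), along a curve. -/
def Bbar (α : Fin k → PhasePt (m + k) m → ℝ) (q : ℝ → Fin (m + k) → ℝ)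
    (t : ℝ) (ν : Fin k) : ℝ :=
  (∑ r : Fin m, ivel q t r *
      (pq (abar α ν) (Fin.castAdd k r) (plift q t) - pq (α ν) (Fin.castAdd k r) (plift q t)))
  + (∑ μ : Fin k, (α μ (plift q t) * pq (abar α ν) (Fin.natAdd m μ) (plift q t)
      - abar α μ (plift q t) * pq (α ν) (Fin.natAdd m μ) (plift q t)))
  + (∑ r : Fin m, iacc q t r * (pv (abar α ν) r (plift q t) - pv (α ν) r (plift q t)))
  + ptime (abar α ν) (plift q t)

/-- The full velocity vector `(q̇ ₁,…,q̇ _m, α₁,…,α_k)` obtained from a phase point. -/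
def extVel (α : Fin k → PhasePt (m + k) m → ℝ) (p : PhasePt (m + k) m) : Fin (m + k) → ℝ :=
  Fin.append p.2.1 (fun ν => α ν p)

/-- Restriction `T*` of a kinetic energy `T` by substituting `q̇ (m+ν) = α ν`. -/
def subst (α : Fin k → PhasePt (m + k) m → ℝ) (T : PhasePt (m + k) (m + k) → ℝ)
    (p : PhasePt (m + k) m) : ℝ :=
  T (p.1, extVel α p, p.2.2)

/-- `∂T/∂q̇ (m+ν)` with the dependent velocities replaced by `α₁, …, α_k`. -/
def pvT (α : Fin k → PhasePt (m + k) m → ℝ) (T : PhasePt (m + k) (m + k) → ℝ)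
    (ν : Fin k) (p : PhasePt (m + k) m) : ℝ :=
  pv T (Fin.natAdd m ν) (p.1, extVel α p, p.2.2)

/-- Partial derivative of a potential `U(q, t)` with respect to `q j`. -/
def pqU {n : ℕ} (U : (Fin n → ℝ) × ℝ → ℝ) (j : Fin n) (p : (Fin n → ℝ) × ℝ) : ℝ :=
  fderiv ℝ U p (Pi.single j 1, 0)

/-- Partial derivative of a potential `U(q, t)` with respect to time. -/
def ptU {n : ℕ} (U : (Fin n → ℝ) × ℝ → ℝ) (p : (Fin n → ℝ) × ℝ) : ℝ :=
  fderiv ℝ U p (0, 1)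

/-- The Lagrangian `L* = T* + U` in terms of the independent velocities. -/
def Lag (α : Fin k → PhasePt (m + k) m → ℝ) (T : PhasePt (m + k) (m + k) → ℝ)
    (U : (Fin (m + k) → ℝ) × ℝ → ℝ) (p : PhasePt (m + k) m) : ℝ :=
  subst α T p + U (p.1, p.2.2)

/-- The energy `∑ i q̇ i ∂L*/∂q̇ i − L*` of a function `L*` along a curve. -/
def energy (L : PhasePt (m + k) m → ℝ) (q : ℝ → Fin (m + k) → ℝ) (t : ℝ) : ℝ :=
  (∑ i : Fin m, ivel q t i * pv L i (plift q t)) - L (plift q t)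

/-! Differentiating `ᾱ_ν = ∑ i, q̇_i ∂α_ν/∂q̇_i` by the product rule gives
`∂ᾱ_ν/∂q_j = ∑ i, q̇_i ∂²α_ν/∂q̇_i∂q_j`, the same for `∂ᾱ_ν/∂t`, and
`∂ᾱ_ν/∂q̇_r = ∂α_ν/∂q̇_r + ∑ i, q̇_i ∂²α_ν/∂q̇_i∂q̇_r`. Substituting these into `B̄_ν` and
exchanging the order of the double sums yields `∑ i, B_i^ν q̇_i` term by term. -/

theorem sum_sum_mul_mul_comm {R ι κ : Type*} [CommSemiring R] [Fintype ι] [Fintype κ]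
    (g : ι → κ → R) (c : κ → R) (v : ι → R) :
    ∑ i, (∑ r, g i r * c r) * v i = ∑ r, c r * ∑ i, v i * g i r := by
  simp only [Finset.sum_mul, Finset.mul_sum]
  rw [Finset.sum_comm]
  exact Finset.sum_congr rfl fun r _ => Finset.sum_congr rfl fun i _ => by ring

section EulerVel

variable {n m : ℕ}

def eulerVel (f : PhasePt n m → ℝ) (p : PhasePt n m) : ℝ :=
  ∑ i : Fin m, p.2.1 i * pv f i p

theorem differentiable_pv {f : PhasePt n m → ℝ} (hf : ContDiff ℝ 2 f) (i : Fin m) :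
    Differentiable ℝ (pv f i) :=
  ((hf.fderiv_right le_rfl).clm_apply contDiff_const).differentiable one_ne_zero

theorem fderiv_eulerVel_apply {f : PhasePt n m → ℝ} {p : PhasePt n m}
    (hf : ∀ i, DifferentiableAt ℝ (pv f i) p) (d : PhasePt n m) :
    fderiv ℝ (eulerVel f) p d
      = ∑ i, d.2.1 i * pv f i p + ∑ i, p.2.1 i * fderiv ℝ (pv f i) p d := by
  have hcoord (i : Fin m) : HasFDerivAt (fun p : PhasePt n m => p.2.1 i) _ p :=
    ((ContinuousLinearMap.proj i).comp ((ContinuousLinearMap.fst ℝ (Fin m → ℝ) ℝ).comp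
      (ContinuousLinearMap.snd ℝ (Fin n → ℝ) _))).hasFDerivAt
  have h : HasFDerivAt (eulerVel f) _ p :=
    HasFDerivAt.fun_sum (u := Finset.univ) fun i _ => (hcoord i).fun_mul (hf i).hasFDerivAt
  rw [h.fderiv]
  simp [Finset.sum_add_distrib, mul_comm, add_comm]

theorem pq_eulerVel {f : PhasePt n m → ℝ} {p : PhasePt n m}
    (hf : ∀ i, DifferentiableAt ℝ (pv f i) p) (j : Fin n) :
    pq (eulerVel f) j p = ∑ i, p.2.1 i * pq (pv f i) j p := by
  simp [pq, fderiv_eulerVel_apply hf]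

theorem pv_eulerVel {f : PhasePt n m → ℝ} {p : PhasePt n m}
    (hf : ∀ i, DifferentiableAt ℝ (pv f i) p) (r : Fin m) :
    pv (eulerVel f) r p = pv f r p + ∑ i, p.2.1 i * pv (pv f i) r p := by
  simp [pv, fderiv_eulerVel_apply hf, Pi.single_apply]

theorem ptime_eulerVel {f : PhasePt n m → ℝ} {p : PhasePt n m}
    (hf : ∀ i, DifferentiableAt ℝ (pv f i) p) :
    ptime (eulerVel f) p = ∑ i, p.2.1 i * ptime (pv f i) p := by
  simp [ptime, fderiv_eulerVel_apply hf]

end EulerVel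

theorem abar_eq_eulerVel (α : Fin k → PhasePt (m + k) m → ℝ) (ν : Fin k) :
    abar α ν = eulerVel (α ν) :=
  rfl

theorem sum_Bcoef_mul_vel_eq_Bbar_general
    (m k : ℕ)
    (α : Fin k → PhasePt (m + k) m → ℝ) (hα : ∀ ν, ContDiff ℝ 2 (α ν))
    (q : ℝ → Fin (m + k) → ℝ) :
    ∀ (t : ℝ) (ν : Fin k),
      ∑ i : Fin m, Bcoef α q t ν i * ivel q t i = Bbar α q t ν := by
  intro t ν
  have hvel : (plift q t).2.1 = ivel q t := rfl
  have hpv (μ : Fin k) (i : Fin m) : DifferentiableAt ℝ (pv (α μ) i) (plift q t) :=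
    differentiable_pv (hα μ) i _
  simp only [Bbar, abar_eq_eulerVel, pq_eulerVel (hpv _), pv_eulerVel (hpv ν),
    ptime_eulerVel (hpv ν), eulerVel, hvel, add_sub_cancel_left, mul_sub, Finset.sum_sub_distrib]
  simp only [Bcoef, add_mul, sub_mul, Finset.sum_add_distrib, Finset.sum_sub_distrib,
    sum_sum_mul_mul_comm]
  simp only [mul_comm]
  ring

/-- Along every admissible `C²` curve, `∑ i B i ν q̇ i = B̄ ν`
(the intermediate identity (19) in the proof of the energy balance). -/
theorem sum_Bcoef_mul_vel_eq_Bbar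
    (m k : ℕ) (hm : 1 ≤ m) (hk : 1 ≤ k)
    (α : Fin k → PhasePt (m + k) m → ℝ) (hα : ∀ ν, ContDiff ℝ 2 (α ν))
    (q : ℝ → Fin (m + k) → ℝ) (hq : ContDiff ℝ 2 q)
    (hadm : Admissible α q) :
    ∀ (t : ℝ) (ν : Fin k),
      ∑ i : Fin m, Bcoef α q t ν i * ivel q t i = Bbar α q t ν :=
  sum_Bcoef_mul_vel_eq_Bbar_general m k α hα q

end
end

section
/- Let m, k ≥ 1, n = m + k. Suppose the constraint functions, the kinetic energy and the potential do not depend on the coordinates q_{m+1},…,qₙ, i.e. α_ν = α_ν(q₁,…,q_m, q̇₁,…,q̇_m, t) are C², T = T(q₁,…,q_m, q̇₁,…,q̇ₙ, t) is C², and U = U(q₁,…,q_m, t) is C² (a nonlinear Čaplygin system with forces deriving from the potential U). Set ᾱ_ν := Σ_{i=1}^m q̇_i ∂α_ν/∂q̇_i, T*(q₁,…,q_m, q̇₁,…,q̇_m, t) := T(q₁,…,q_m, q̇₁,…,q̇_m, α₁,…,α_k, t), L* := T* + U, and define B_i^ν as in the Voronec-type formalism. Then along every C² admissible curve q(t) (q̇_{m+ν}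 = α_ν along the curve) satisfying the equations of motion d/dt(∂T*/∂q̇_i) − ∂T*/∂q_i − Σ_{ν=1}^k B_i^ν ∂T/∂q̇_{m+ν} = ∂U/∂q_i for i = 1,…,m, one has: d/dt( Σ_{i=1}^m q̇_i ∂L*/∂q̇_i − L* ) − Σ_{ν=1}^k [ d/dt(ᾱ_ν − α_ν) + ∂α_ν/∂t ] ∂T/∂q̇_{m+ν} = − ∂L*/∂t, where d/dt(ᾱ_ν − α_ν) is the derivative along the curve. -/
open scoped BigOperators

noncomputable section

variable {m k : ℕ}

/-!
Nothing depends on the dependent coordinates `q (m+ν)`, so the chain rule along a curve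
involves only `q̇ i`, `q̈ i` and `t`, for `L*`, `α ν` and `∂α ν/∂q̇ i` alike. Differentiating
the energy and inserting the equations of motion leaves
`∑ i q̇ i ∑ ν B i ν ∂T/∂q̇ (m+ν) − ∂L*/∂t`. In this setting
`B i ν = d/dt(∂α ν/∂q̇ i) − ∂α ν/∂q i`, whence `∑ i q̇ i B i ν = d/dt(ᾱ ν − α ν) + ∂α ν/∂t`.
-/

theorem lineDeriv_eq_zero_of_forall_add_smul_eq {E : Type*} [AddCommGroup E] [Module ℝ E]
    {f : E → ℝ} {p w : E} (h : ∀ c : ℝ, f (p + c • w) = f p) :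
    lineDeriv ℝ f p w = 0 := by
  simp only [lineDeriv, h, deriv_const]

section PhaseSpace

variable {n : ℕ}

theorem fderiv_apply_eq_sum_partials (f : PhasePt n m → ℝ) (p : PhasePt n m)
    (x : Fin n → ℝ) (v : Fin m → ℝ) (s : ℝ) :
    fderiv ℝ f p (x, v, s) =
      (∑ j, x j * pq f j p) + (∑ i, v i * pv f i p) + s * ptime f p := by
  have hw : ((x, v, s) : PhasePt n m) =
      (∑ j, x j • ((Pi.single j 1, 0, 0) : PhasePt n m))
        + (∑ i, v i • ((0, Pi.single i 1, 0) : PhasePt n m)) + s • (0, 0, 1) := by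
    ext <;> simp [Prod.fst_sum, Prod.snd_sum, Finset.sum_apply, Pi.single_apply]
  rw [hw]
  simp only [map_add, map_sum, map_smul, smul_eq_mul, pq, pv, ptime]

theorem DifferentiableAt.hasDerivAt_comp_phasePt {f : PhasePt n m → ℝ} {x : ℝ → Fin n → ℝ}
    {v : ℝ → Fin m → ℝ} {x' : Fin n → ℝ} {v' : Fin m → ℝ} {t : ℝ}
    (hf : DifferentiableAt ℝ f (x t, v t, t))
    (hx : HasDerivAt x x' t) (hv : HasDerivAt v v' t) :
    HasDerivAt (fun s => f (x s, v s, s))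
      ((∑ j, x' j * pq f j (x t, v t, t)) + (∑ i, v' i * pv f i (x t, v t, t))
        + ptime f (x t, v t, t)) t := by
  have h := hf.hasFDerivAt.comp_hasDerivAt t (hx.prodMk (hv.prodMk (hasDerivAt_id t)))
  rwa [Function.comp_def, fderiv_apply_eq_sum_partials, one_mul] at h

theorem contDiff_pv {N : WithTop ℕ∞} {f : PhasePt n m → ℝ} (hf : ContDiff ℝ (N + 1) f)
    (i : Fin m) : ContDiff ℝ N (pv f i) :=
  (hf.fderiv_right le_rfl).clm_apply contDiff_const

end PhaseSpace

section Curves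

variable {q : ℝ → Fin (m + k) → ℝ}

theorem hasDerivAt_ivel (hq : ContDiff ℝ 2 q) (t : ℝ) : HasDerivAt (ivel q) (iacc q t) t := by
  have hq' : Differentiable ℝ (deriv q) :=
    ((contDiff_succ_iff_deriv (n := 1)).mp hq).2.2.differentiable one_ne_zero
  exact (ContinuousLinearMap.pi fun i : Fin m => ContinuousLinearMap.proj (R := ℝ)
    (φ := fun _ : Fin (m + k) => ℝ) (Fin.castAdd k i)).hasFDerivAt.comp_hasDerivAt t
    (hq' t).hasDerivAt

theorem hasDerivAt_comp_plift {f : PhasePt (m + k) m → ℝ} (hf : Differentiable ℝ f)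
    (hq : ContDiff ℝ 2 q) (t : ℝ) :
    HasDerivAt (fun s => f (plift q s))
      ((∑ j, deriv q t j * pq f j (plift q t)) + (∑ i, iacc q t i * pv f i (plift q t))
        + ptime f (plift q t)) t :=
  (hf _).hasDerivAt_comp_phasePt ((hq.differentiable two_ne_zero t).hasDerivAt)
    (hasDerivAt_ivel hq t)

end Curves

section Lagrangian

variable {α : Fin k → PhasePt (m + k) m → ℝ} {T : PhasePt (m + k) (m + k) → ℝ}
  {U : (Fin (m + k) → ℝ) × ℝ → ℝ}

theorem contDiff_subst {N : WithTop ℕ∞} (hα : ∀ ν, ContDiff ℝ N (α ν)) (hT : ContDiff ℝ N T) :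
    ContDiff ℝ N (subst α T) := by
  refine hT.comp (contDiff_fst.prodMk (ContDiff.prodMk ?_ contDiff_snd.snd))
  refine contDiff_pi.2 fun j => Fin.addCases (fun i => ?_) (fun ν => ?_) j
  · simp only [extVel, Fin.append_left]
    exact (contDiff_apply ℝ ℝ i).comp contDiff_snd.fst
  · simpa [extVel] using hα ν

theorem contDiff_Lag {N : WithTop ℕ∞} (hα : ∀ ν, ContDiff ℝ N (α ν)) (hT : ContDiff ℝ N T)
    (hU : ContDiff ℝ N U) : ContDiff ℝ N (Lag α T U) :=
  (contDiff_subst hα hT).add (hU.comp (contDiff_fst.prodMk contDiff_snd.snd))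

theorem fderiv_Lag_apply (hT : Differentiable ℝ (subst α T)) (hU : Differentiable ℝ U)
    (p w : PhasePt (m + k) m) :
    fderiv ℝ (Lag α T U) p w =
      fderiv ℝ (subst α T) p w + fderiv ℝ U (p.1, p.2.2) (w.1, w.2.2) := by
  have hπ : HasFDerivAt (fun p : PhasePt (m + k) m => (p.1, p.2.2)) _ p :=
    hasFDerivAt_fst.prodMk (hasFDerivAt_snd (𝕜 := ℝ)).snd
  have h := (hT p).hasFDerivAt.add ((hU (p.1, p.2.2)).hasFDerivAt.comp p hπ)
  rw [show Lag α T U = subst α T + U ∘ fun p => (p.1, p.2.2) from rfl, h.fderiv]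
  rfl

theorem pv_Lag (hT : Differentiable ℝ (subst α T)) (hU : Differentiable ℝ U) (i : Fin m) :
    pv (Lag α T U) i = pv (subst α T) i := by
  ext p
  simp [pv, fderiv_Lag_apply hT hU, ← Prod.zero_eq_mk]

theorem pq_Lag (hT : Differentiable ℝ (subst α T)) (hU : Differentiable ℝ U) (j : Fin (m + k))
    (p : PhasePt (m + k) m) :
    pq (Lag α T U) j p = pq (subst α T) j p + pqU U j (p.1, p.2.2) := by
  simp [pq, pqU, fderiv_Lag_apply hT hU]

end Lagrangian

section Ignorable

def IgnoresDependentCoords (f : PhasePt (m + k) m → ℝ) : Prop :=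
  ∀ (x x' : Fin (m + k) → ℝ) (v : Fin m → ℝ) (t : ℝ),
    (∀ i : Fin m, x (Fin.castAdd k i) = x' (Fin.castAdd k i)) → f (x, v, t) = f (x', v, t)

theorem IgnoresDependentCoords.pq_natAdd_eq_zero {f : PhasePt (m + k) m → ℝ}
    (hf : IgnoresDependentCoords f) {p : PhasePt (m + k) m} (hfp : DifferentiableAt ℝ f p)
    (ν : Fin k) : pq f (Fin.natAdd m ν) p = 0 := by
  rw [pq, ← hfp.lineDeriv_eq_fderiv]
  refine lineDeriv_eq_zero_of_forall_add_smul_eq fun c => ?_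
  obtain ⟨x, v, t⟩ := p
  convert hf (x + c • Pi.single (Fin.natAdd m ν) 1) x v t fun i => ?_ using 2
  · simp
  · have hi : Fin.castAdd k i ≠ Fin.natAdd m ν := by
      simp only [ne_eq, Fin.ext_iff, Fin.val_castAdd, Fin.val_natAdd]; omega
    simp [hi]

theorem ignoresDependentCoords_pv {f : PhasePt (m + k) m → ℝ} (hf : IgnoresDependentCoords f)
    (hfd : Differentiable ℝ f) (i : Fin m) :
    IgnoresDependentCoords (pv f i) := by
  intro x x' v t h
  simp only [pv, ← (hfd _).lineDeriv_eq_fderiv, lineDeriv]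
  congr 1
  funext c
  simpa using hf x x' (v + c • Pi.single i 1) t h

variable {α : Fin k → PhasePt (m + k) m → ℝ} {T : PhasePt (m + k) (m + k) → ℝ}
  {U : (Fin (m + k) → ℝ) × ℝ → ℝ}

theorem ignoresDependentCoords_subst (hα : ∀ ν, IgnoresDependentCoords (α ν))
    (hT : ∀ (x x' : Fin (m + k) → ℝ) (u : Fin (m + k) → ℝ) (t : ℝ),
      (∀ i : Fin m, x (Fin.castAdd k i) = x' (Fin.castAdd k i)) → T (x, u, t) = T (x', u, t)) :
    IgnoresDependentCoords (subst α T) := by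
  intro x x' v t h
  have hvel : extVel α (x, v, t) = extVel α (x', v, t) := by
    simp only [extVel, hα _ x x' v t h]
  simp only [subst, hvel]
  exact hT x x' _ t h

theorem ignoresDependentCoords_Lag (hα : ∀ ν, IgnoresDependentCoords (α ν))
    (hT : ∀ (x x' : Fin (m + k) → ℝ) (u : Fin (m + k) → ℝ) (t : ℝ),
      (∀ i : Fin m, x (Fin.castAdd k i) = x' (Fin.castAdd k i)) → T (x, u, t) = T (x', u, t))
    (hU : ∀ (x x' : Fin (m + k) → ℝ) (t : ℝ),
      (∀ i : Fin m, x (Fin.castAdd k i) = x' (Fin.castAdd k i)) → U (x, t) = U (x', t)) :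
    IgnoresDependentCoords (Lag α T U) := by
  intro x x' v t h
  simp only [Lag, ignoresDependentCoords_subst hα hT x x' v t h, hU x x' t h]

theorem IgnoresDependentCoords.hasDerivAt_comp_plift {f : PhasePt (m + k) m → ℝ}
    (hf : IgnoresDependentCoords f) (hfd : Differentiable ℝ f) {q : ℝ → Fin (m + k) → ℝ}
    (hq : ContDiff ℝ 2 q) (t : ℝ) :
    HasDerivAt (fun s => f (plift q s))
      ((∑ i, ivel q t i * pq f (Fin.castAdd k i) (plift q t))
        + (∑ i, iacc q t i * pv f i (plift q t)) + ptime f (plift q t)) t := by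
  have h := _root_.hasDerivAt_comp_plift hfd hq t
  simp only [Fin.sum_univ_add, hf.pq_natAdd_eq_zero (hfd _), mul_zero, Finset.sum_const_zero,
    add_zero] at h
  exact h

end Ignorable

section Dynamics

variable {q : ℝ → Fin (m + k) → ℝ}

theorem hasDerivAt_sum_ivel_mul (hq : ContDiff ℝ 2 q) {g : Fin m → ℝ → ℝ} {t : ℝ}
    (hg : ∀ i, DifferentiableAt ℝ (g i) t) :
    HasDerivAt (fun s => ∑ i, ivel q s i * g i s)
      (∑ i, (iacc q t i * g i t + ivel q t i * deriv (g i) t)) t :=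
  HasDerivAt.fun_sum fun i _ => (hasDerivAt_pi.1 (hasDerivAt_ivel hq t) i).mul (hg i).hasDerivAt

theorem hasDerivAt_energy {L : PhasePt (m + k) m → ℝ} (hL : ContDiff ℝ 2 L)
    (hLq : IgnoresDependentCoords L) (hq : ContDiff ℝ 2 q) (t : ℝ) :
    HasDerivAt (energy L q)
      ((∑ i, ivel q t i * (deriv (fun s => pv L i (plift q s)) t
        - pq L (Fin.castAdd k i) (plift q t))) - ptime L (plift q t)) t := by
  have hpv : ∀ i, DifferentiableAt ℝ (fun s => pv L i (plift q s)) t := fun i =>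
    (hasDerivAt_comp_plift ((contDiff_pv hL i).differentiable one_ne_zero) hq t).differentiableAt
  have h : HasDerivAt (energy L q) _ t := (hasDerivAt_sum_ivel_mul hq hpv).fun_sub
    (hLq.hasDerivAt_comp_plift (hL.differentiable two_ne_zero) hq t)
  refine h.congr_deriv ?_
  simp only [mul_sub, Finset.sum_sub_distrib, Finset.sum_add_distrib]
  ring

variable {α : Fin k → PhasePt (m + k) m → ℝ} {ν : Fin k}

theorem Bcoef_eq_deriv_pv_sub_pq (hα : ContDiff ℝ 2 (α ν)) (hαq : IgnoresDependentCoords (α ν))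
    (hq : ContDiff ℝ 2 q) (t : ℝ) (i : Fin m) :
    Bcoef α q t ν i =
      deriv (fun s => pv (α ν) i (plift q s)) t - pq (α ν) (Fin.castAdd k i) (plift q t) := by
  have hd := hα.differentiable two_ne_zero
  have hpvd := (contDiff_pv hα i).differentiable one_ne_zero
  have hpvq := ignoresDependentCoords_pv hαq hd i
  rw [(hpvq.hasDerivAt_comp_plift hpvd hq t).deriv]
  simp only [Bcoef, hpvq.pq_natAdd_eq_zero (hpvd _), hαq.pq_natAdd_eq_zero (hd _), zero_mul,
    mul_zero, sub_zero, Finset.sum_const_zero, add_zero, Finset.sum_add_distrib]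
  simp only [mul_comm (pq _ _ _), mul_comm (pv _ _ _)]
  ring

theorem deriv_abar_sub_add_ptime (hα : ContDiff ℝ 2 (α ν)) (hαq : IgnoresDependentCoords (α ν))
    (hq : ContDiff ℝ 2 q) (t : ℝ) :
    deriv (fun s => abar α ν (plift q s) - α ν (plift q s)) t + ptime (α ν) (plift q t) =
      ∑ i, ivel q t i * Bcoef α q t ν i := by
  have hd := hα.differentiable two_ne_zero
  have hpv : ∀ i, DifferentiableAt ℝ (fun s => pv (α ν) i (plift q s)) t := fun i =>
    (hasDerivAt_comp_plift ((contDiff_pv hα i).differentiable one_ne_zero) hq t).differentiableAt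
  have habar : HasDerivAt (fun s => abar α ν (plift q s)) _ t := hasDerivAt_sum_ivel_mul hq hpv
  rw [(habar.fun_sub (hαq.hasDerivAt_comp_plift hd hq t)).deriv]
  simp only [Bcoef_eq_deriv_pv_sub_pq hα hαq hq t, mul_sub, Finset.sum_add_distrib,
    Finset.sum_sub_distrib]
  ring

end Dynamics

theorem energy_balance_caplygin_general
    (m k : ℕ)
    (α : Fin k → PhasePt (m + k) m → ℝ) (hα : ∀ ν, ContDiff ℝ 2 (α ν))
    (T : PhasePt (m + k) (m + k) → ℝ) (hT : ContDiff ℝ 2 T)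
    (U : (Fin (m + k) → ℝ) × ℝ → ℝ) (hU : ContDiff ℝ 2 U)
    -- the constraint functions do not depend on `q (m+1), …, q (m+k)`:
    (hαq : ∀ (ν : Fin k) (x x' : Fin (m + k) → ℝ) (v : Fin m → ℝ) (t : ℝ),
      (∀ i : Fin m, x (Fin.castAdd k i) = x' (Fin.castAdd k i)) →
      α ν (x, v, t) = α ν (x', v, t))
    -- the kinetic energy does not depend on `q (m+1), …, q (m+k)`:
    (hTq : ∀ (x x' : Fin (m + k) → ℝ) (u : Fin (m + k) → ℝ) (t : ℝ),
      (∀ i : Fin m, x (Fin.castAdd k i) = x' (Fin.castAdd k i)) →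
      T (x, u, t) = T (x', u, t))
    -- the potential does not depend on `q (m+1), …, q (m+k)`:
    (hUq : ∀ (x x' : Fin (m + k) → ℝ) (t : ℝ),
      (∀ i : Fin m, x (Fin.castAdd k i) = x' (Fin.castAdd k i)) →
      U (x, t) = U (x', t))
    (q : ℝ → Fin (m + k) → ℝ) (hq : ContDiff ℝ 2 q)
    (heom : ∀ (t : ℝ) (i : Fin m),
      deriv (fun s => pv (subst α T) i (plift q s)) t
        - pq (subst α T) (Fin.castAdd k i) (plift q t)
        - (∑ ν : Fin k, Bcoef α q t ν i * pvT α T ν (plift q t)) =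
      pqU U (Fin.castAdd k i) (q t, t)) :
    ∀ t : ℝ,
      deriv (fun s => energy (Lag α T U) q s) t
        - (∑ ν : Fin k,
            (deriv (fun s => abar α ν (plift q s) - α ν (plift q s)) t
              + ptime (α ν) (plift q t)) * pvT α T ν (plift q t)) =
      - ptime (Lag α T U) (plift q t) := by
  intro t
  have hsubst := (contDiff_subst hα hT).differentiable two_ne_zero
  have hUd := hU.differentiable two_ne_zero
  have hlagrange : ∀ i, deriv (fun s => pv (Lag α T U) i (plift q s)) t
      - pq (Lag α T U) (Fin.castAdd k i) (plift q t)
      = ∑ ν, Bcoef α q t ν i * pvT α T ν (plift q t) := fun i => by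
    have h := heom t i
    rw [pv_Lag hsubst hUd, pq_Lag hsubst hUd]
    dsimp only [plift] at h ⊢
    linarith
  rw [(hasDerivAt_energy (contDiff_Lag hα hT hU) (ignoresDependentCoords_Lag hαq hTq hUq) hq
    t).deriv]
  simp only [hlagrange, deriv_abar_sub_add_ptime (hα _) (hαq _) hq t, Finset.mul_sum,
    Finset.sum_mul, mul_assoc]
  rw [Finset.sum_comm]
  ring

/-- Corollary 1 of the paper: energy balance (21) for nonlinear
Čaplygin systems.  If the constraint functions, the kinetic energy and the potential do
not depend on the coordinates `q (m+1), …, q (m+k)`, then along every admissible `C²`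
solution of the equations of motion
`d/dt(∂T*/∂q̇ i) − ∂T*/∂q i − ∑ ν B i ν ∂T/∂q̇ (m+ν) = ∂U/∂q i`, one has
`d/dt(∑ i q̇ i ∂L*/∂q̇ i − L*) − ∑ ν [d/dt(ᾱ ν − α ν) + ∂α ν/∂t] ∂T/∂q̇ (m+ν) = − ∂L*/∂t`. -/
theorem energy_balance_caplygin
    (m k : ℕ) (hm : 1 ≤ m) (hk : 1 ≤ k)
    (α : Fin k → PhasePt (m + k) m → ℝ) (hα : ∀ ν, ContDiff ℝ 2 (α ν))
    (T : PhasePt (m + k) (m + k) → ℝ) (hT : ContDiff ℝ 2 T)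
    (U : (Fin (m + k) → ℝ) × ℝ → ℝ) (hU : ContDiff ℝ 2 U)
    -- the constraint functions do not depend on `q (m+1), …, q (m+k)`:
    (hαq : ∀ (ν : Fin k) (x x' : Fin (m + k) → ℝ) (v : Fin m → ℝ) (t : ℝ),
      (∀ i : Fin m, x (Fin.castAdd k i) = x' (Fin.castAdd k i)) →
      α ν (x, v, t) = α ν (x', v, t))
    -- the kinetic energy does not depend on `q (m+1), …, q (m+k)`:
    (hTq : ∀ (x x' : Fin (m + k) → ℝ) (u : Fin (m + k) → ℝ) (t : ℝ),
      (∀ i : Fin m, x (Fin.castAdd k i) = x' (Fin.castAdd k i)) →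
      T (x, u, t) = T (x', u, t))
    -- the potential does not depend on `q (m+1), …, q (m+k)`:
    (hUq : ∀ (x x' : Fin (m + k) → ℝ) (t : ℝ),
      (∀ i : Fin m, x (Fin.castAdd k i) = x' (Fin.castAdd k i)) →
      U (x, t) = U (x', t))
    (q : ℝ → Fin (m + k) → ℝ) (hq : ContDiff ℝ 2 q)
    (hadm : Admissible α q)
    (heom : ∀ (t : ℝ) (i : Fin m),
      deriv (fun s => pv (subst α T) i (plift q s)) t
        - pq (subst α T) (Fin.castAdd k i) (plift q t)
        - (∑ ν : Fin k, Bcoef α q t ν i * pvT α T ν (plift q t)) =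
      pqU U (Fin.castAdd k i) (q t, t)) :
    ∀ t : ℝ,
      deriv (fun s => energy (Lag α T U) q s) t
        - (∑ ν : Fin k,
            (deriv (fun s => abar α ν (plift q s) - α ν (plift q s)) t
              + ptime (α ν) (plift q t)) * pvT α T ν (plift q t)) =
      - ptime (Lag α T U) (plift q t) :=
  energy_balance_caplygin_general m k α hα T hT U hU hαq hTq hUq q hq heom
end
end

section
/- Let m, k ≥ 1, n = m + k, and let the kinetic energy have the standard form T = (1/2) Σ_{i,j=1}^n g_{i,j}(q,t) q̇_i q̇_j + Σ_{i=1}^n b_i(q,t) q̇_i + c(q,t) with g symmetric, and let U = U(q,t) be a potential. Let α_ν(q₁,…,qₙ, q̇₁,…,q̇_m, t), ν = 1,…,k, be C¹ constraint functions, set ᾱ_ν := Σ_{i=1}^m q̇_i ∂α_ν/∂q̇_i, and let L* := T* + U where T* is obtained from T by substituting q̇_{m+ν} = α_ν. Then, identically in (q₁,…,qₙ, q̇₁,…,q̇_m, t): Σ_{i=1}^m q̇_i ∂L*/∂q̇_i − L* = (1/2) Σ_{r,s=1}^m g_{r,s} q̇_r q̇_s + Σ_{ν,μ=1}^k g_{m+ν,m+μ}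 ( ᾱ_ν α_μ − (1/2) α_ν α_μ ) + Σ_{r=1}^m Σ_{ν=1}^k g_{r,m+ν} ᾱ_ν q̇_r + Σ_{ν=1}^k b_{m+ν} (ᾱ_ν − α_ν) − c − U. -/
open scoped BigOperators

noncomputable section

variable {m k : ℕ}

/-- Partial derivative of `f` with respect to the independent velocity `q̇ r` only
(the positions and time being held fixed). -/
def pvOnly {n m : ℕ} (f : PhasePt n m → ℝ) (r : Fin m) (p : PhasePt n m) : ℝ :=
  fderiv ℝ (fun v => f (p.1, v, p.2.2)) p.2.1 (Pi.single r 1)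

/-!
The Euler sum `∑ q̇ᵢ ∂L*/∂q̇ᵢ` is the derivative of `v ↦ L*(q, v, t)` in the direction of `v`
itself. By the chain rule it is the derivative of the quadratic `T` at the full velocity
`(q̇, α)` in the direction `(q̇, ᾱ)`, i.e. `∑ᵢ (∑ⱼ gᵢⱼ q̇ⱼ + bᵢ) q̇̄ᵢ` for symmetric `g`.
Subtracting `L*` and splitting the indices into the blocks `1..m` and `m+1..m+k` gives (23);
by the symmetry of `g` the two mixed blocks merge into the single term `∑ g_{r,m+ν} ᾱ_ν q̇_r`.
-/

theorem LinearMap.sum_smul_apply_single {ι R M : Type*} [Fintype ι] [DecidableEq ι] [Semiring R]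
    [AddCommMonoid M] [Module R M] (f : (ι → R) →ₗ[R] M) (x : ι → R) :
    ∑ i, x i • f (Pi.single i 1) = f x := by
  conv_rhs => rw [pi_eq_sum_univ' x, map_sum]
  simp only [map_smul]

theorem fderiv_quadratic_apply {ι : Type*} [Fintype ι] {g : ι → ι → ℝ}
    (hg : ∀ i j, g i j = g j i) (b : ι → ℝ) (c : ℝ) (u h : ι → ℝ) :
    fderiv ℝ (fun u : ι → ℝ => (1 / 2) * (∑ i, ∑ j, g i j * u i * u j) + (∑ i, b i * u i) + c)
      u h = ∑ i, (∑ j, g i j * u j + b i) * h i := by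
  have hQ := ((((HasFDerivAt.fun_sum (u := Finset.univ) fun i _ =>
      HasFDerivAt.fun_sum (u := Finset.univ) fun j _ =>
      ((hasFDerivAt_apply (𝕜 := ℝ) i u).const_mul (g i j)).fun_mul
        (hasFDerivAt_apply j u)).const_mul (1 / 2 : ℝ)).fun_add
      (HasFDerivAt.fun_sum (u := Finset.univ) fun i _ =>
        (hasFDerivAt_apply (𝕜 := ℝ) i u).const_mul (b i))).add_const c)
  rw [hQ.fderiv]
  simp only [add_apply, smul_apply, sum_apply, ContinuousLinearMap.proj_apply, smul_eq_mul,
    Finset.sum_add_distrib, add_mul, Finset.sum_mul]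
  have hswap : ∑ i, ∑ j, g i j * u i * h j = ∑ i, ∑ j, g i j * u j * h i := by
    rw [Finset.sum_comm]
    exact Finset.sum_congr rfl fun i _ => Finset.sum_congr rfl fun j _ => by rw [hg]
  have hcomm : ∑ i, ∑ j, u j * (g i j * h i) = ∑ i, ∑ j, g i j * u j * h i :=
    Finset.sum_congr rfl fun i _ => Finset.sum_congr rfl fun j _ => by ring
  rw [hswap, hcomm]
  ring

theorem quadratic_energy_eq {ι : Type*} [Fintype ι] (g : ι → ι → ℝ) (b : ι → ℝ) (c : ℝ)
    (w w' : ι → ℝ) :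
    (∑ i, (∑ j, g i j * w j + b i) * w' i)
      - ((1 / 2) * (∑ i, ∑ j, g i j * w i * w j) + (∑ i, b i * w i) + c)
      = (∑ i, ∑ j, g i j * (w' i * w j - (1 / 2) * (w i * w j)))
        + (∑ i, b i * (w' i - w i)) - c := by
  have hquad : ∑ i, ∑ j, g i j * (w' i * w j - (1 / 2) * (w i * w j))
      = ∑ i, (∑ j, g i j * w j) * w' i - (1 / 2) * ∑ i, ∑ j, g i j * w i * w j := by
    simp only [Finset.mul_sum, Finset.sum_mul, ← Finset.sum_sub_distrib]
    exact Finset.sum_congr rfl fun i _ => Finset.sum_congr rfl fun j _ => by ring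
  rw [hquad]
  simp only [add_mul, mul_sub, Finset.sum_add_distrib, Finset.sum_sub_distrib]
  ring

theorem quadratic_energy_append_eq {m k : ℕ} {g : Fin (m + k) → Fin (m + k) → ℝ}
    (hg : ∀ i j, g i j = g j i) (b : Fin (m + k) → ℝ) (c : ℝ) (v : Fin m → ℝ)
    (a a' : Fin k → ℝ) :
    (∑ i, (∑ j, g i j * Fin.append v a j + b i) * Fin.append v a' i)
      - ((1 / 2) * (∑ i, ∑ j, g i j * Fin.append v a i * Fin.append v a j)
        + (∑ i, b i * Fin.append v a i) + c)
      = (1 / 2) * (∑ r, ∑ s, g (Fin.castAdd k r) (Fin.castAdd k s) * v r * v s)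
        + (∑ ν, ∑ μ, g (Fin.natAdd m ν) (Fin.natAdd m μ) * (a' ν * a μ - (1 / 2) * (a ν * a μ)))
        + (∑ r, ∑ ν, g (Fin.castAdd k r) (Fin.natAdd m ν) * a' ν * v r)
        + (∑ ν, b (Fin.natAdd m ν) * (a' ν - a ν)) - c := by
  have hdiag : ∑ r, ∑ s, g (Fin.castAdd k r) (Fin.castAdd k s)
        * (v r * v s - (1 / 2) * (v r * v s))
      = (1 / 2) * (∑ r, ∑ s, g (Fin.castAdd k r) (Fin.castAdd k s) * v r * v s) := by
    simp only [Finset.mul_sum]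
    exact Finset.sum_congr rfl fun r _ => Finset.sum_congr rfl fun s _ => by ring
  have hcross : (∑ r, ∑ μ, g (Fin.castAdd k r) (Fin.natAdd m μ)
        * (v r * a μ - (1 / 2) * (v r * a μ)))
      + (∑ ν, ∑ s, g (Fin.natAdd m ν) (Fin.castAdd k s)
        * (a' ν * v s - (1 / 2) * (a ν * v s)))
      = ∑ r, ∑ ν, g (Fin.castAdd k r) (Fin.natAdd m ν) * a' ν * v r := by
    rw [Finset.sum_comm (f := fun ν s => g (Fin.natAdd m ν) (Fin.castAdd k s) * _),
      ← Finset.sum_add_distrib]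
    refine Finset.sum_congr rfl fun r _ => ?_
    rw [← Finset.sum_add_distrib]
    refine Finset.sum_congr rfl fun ν _ => ?_
    rw [hg (Fin.natAdd m ν)]
    ring
  rw [quadratic_energy_eq]
  simp only [Fin.sum_univ_add, Fin.append_left, Fin.append_right, Finset.sum_add_distrib,
    sub_self, mul_zero, Finset.sum_const_zero, zero_add]
  linear_combination hdiag + hcross

section PhaseSpace

variable {n : ℕ}

theorem hasFDerivAt_velocitySlice (p : PhasePt n m) :
    HasFDerivAt (fun v : Fin m → ℝ => ((p.1, v, p.2.2) : PhasePt n m))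
      ((0 : (Fin m → ℝ) →L[ℝ] (Fin n → ℝ)).prod ((ContinuousLinearMap.id ℝ _).prod 0)) p.2.1 :=
  (hasFDerivAt_const _ _).prodMk ((hasFDerivAt_id _).prodMk (hasFDerivAt_const _ _))

theorem pvOnly_eq_pv {f : PhasePt n m → ℝ} {p : PhasePt n m} (hf : DifferentiableAt ℝ f p)
    (r : Fin m) : pvOnly f r p = pv f r p := by
  rw [pvOnly, pv, fderiv_fun_comp (x := p.2.1) hf (hasFDerivAt_velocitySlice p).differentiableAt,
    (hasFDerivAt_velocitySlice p).fderiv]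
  simp

theorem sum_mul_pvOnly (f : PhasePt n m → ℝ) (p : PhasePt n m) :
    ∑ r, p.2.1 r * pvOnly f r p = fderiv ℝ (fun v => f (p.1, v, p.2.2)) p.2.1 p.2.1 :=
  (fderiv ℝ (fun v => f (p.1, v, p.2.2)) p.2.1).toLinearMap.sum_smul_apply_single p.2.1

end PhaseSpace

section Constraints

variable {α : Fin k → PhasePt (m + k) m → ℝ} {p : PhasePt (m + k) m}

theorem abar_eq_fderiv {ν : Fin k} (hα : DifferentiableAt ℝ (α ν) p) :
    abar α ν p = fderiv ℝ (fun v => α ν (p.1, v, p.2.2)) p.2.1 p.2.1 := by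
  rw [abar, ← sum_mul_pvOnly]
  simp only [pvOnly_eq_pv hα]

theorem differentiableAt_extVel_velocitySlice (hα : ∀ ν, DifferentiableAt ℝ (α ν) p) :
    DifferentiableAt ℝ (fun v => extVel α (p.1, v, p.2.2)) p.2.1 := by
  refine differentiableAt_pi.2 fun i => Fin.addCases (fun r => ?_) (fun ν => ?_) i
  · simpa [extVel] using differentiableAt_apply r p.2.1
  · have hslice : DifferentiableAt ℝ (fun v => α ν (p.1, v, p.2.2)) p.2.1 :=
      (hα ν).comp p.2.1 (hasFDerivAt_velocitySlice p).differentiableAt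
    simpa [extVel] using hslice

theorem fderiv_extVel_velocitySlice_apply_self (hα : ∀ ν, DifferentiableAt ℝ (α ν) p) :
    fderiv ℝ (fun v => extVel α (p.1, v, p.2.2)) p.2.1 p.2.1
      = Fin.append p.2.1 (fun ν => abar α ν p) := by
  ext i
  rw [show fderiv ℝ (fun v => extVel α (p.1, v, p.2.2)) p.2.1 p.2.1 i
      = fderiv ℝ (fun v => extVel α (p.1, v, p.2.2) i) p.2.1 p.2.1 by
    rw [fderiv_apply (differentiableAt_extVel_velocitySlice hα)]; rfl]
  induction i using Fin.addCases with
  | left r => simp [extVel, (hasFDerivAt_apply r p.2.1).fderiv]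
  | right ν => simp [extVel, abar_eq_fderiv (hα ν)]

end Constraints

theorem energy_explicit_formula_general
    (m k : ℕ)
    (g : Fin (m + k) → Fin (m + k) → (Fin (m + k) → ℝ) × ℝ → ℝ)
    (hg : ∀ (i j : Fin (m + k)) (x : (Fin (m + k) → ℝ) × ℝ), g i j x = g j i x)
    (b : Fin (m + k) → (Fin (m + k) → ℝ) × ℝ → ℝ)
    (c : (Fin (m + k) → ℝ) × ℝ → ℝ)
    (U : (Fin (m + k) → ℝ) × ℝ → ℝ)
    (T : PhasePt (m + k) (m + k) → ℝ)
    (hTform : ∀ p : PhasePt (m + k) (m + k),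
      T p = (1 / 2) * (∑ i : Fin (m + k), ∑ j : Fin (m + k),
              g i j (p.1, p.2.2) * p.2.1 i * p.2.1 j)
            + (∑ i : Fin (m + k), b i (p.1, p.2.2) * p.2.1 i) + c (p.1, p.2.2))
    (α : Fin k → PhasePt (m + k) m → ℝ) (hα : ∀ ν, ContDiff ℝ 1 (α ν)) :
    ∀ p : PhasePt (m + k) m,
      (∑ i : Fin m, p.2.1 i * pvOnly (Lag α T U) i p) - Lag α T U p =
        (1 / 2) * (∑ r : Fin m, ∑ s : Fin m,
            g (Fin.castAdd k r) (Fin.castAdd k s) (p.1, p.2.2) * p.2.1 r * p.2.1 s)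
        + (∑ ν : Fin k, ∑ μ : Fin k,
            g (Fin.natAdd m ν) (Fin.natAdd m μ) (p.1, p.2.2)
              * (abar α ν p * α μ p - (1 / 2) * (α ν p * α μ p)))
        + (∑ r : Fin m, ∑ ν : Fin k,
            g (Fin.castAdd k r) (Fin.natAdd m ν) (p.1, p.2.2) * abar α ν p * p.2.1 r)
        + (∑ ν : Fin k, b (Fin.natAdd m ν) (p.1, p.2.2) * (abar α ν p - α ν p))
        - c (p.1, p.2.2) - U (p.1, p.2.2) := by
  intro p
  have hαp (ν : Fin k) : DifferentiableAt ℝ (α ν) p := (hα ν).differentiable one_ne_zero p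
  set x := (p.1, p.2.2)
  set Q : (Fin (m + k) → ℝ) → ℝ := fun u =>
    (1 / 2) * (∑ i, ∑ j, g i j x * u i * u j) + (∑ i, b i x * u i) + c x
  have hLag : (fun v => Lag α T U (p.1, v, p.2.2))
      = fun v => Q (extVel α (p.1, v, p.2.2)) + U x := by
    funext v
    simp only [Lag, subst, hTform, Q, x]
  have hQ : DifferentiableAt ℝ Q (extVel α p) := by fun_prop
  have hEuler : ∑ i, p.2.1 i * pvOnly (Lag α T U) i p
      = ∑ i, (∑ j, g i j x * extVel α p j + b i x) * Fin.append p.2.1 (fun ν => abar α ν p) i := by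
    rw [sum_mul_pvOnly, hLag, fderiv_add_const,
      fderiv_fun_comp (x := p.2.1) hQ (differentiableAt_extVel_velocitySlice hαp),
      ContinuousLinearMap.comp_apply, fderiv_extVel_velocitySlice_apply_self hαp]
    exact fderiv_quadratic_apply (fun i j => hg i j x) _ _ _ _
  rw [hEuler, Lag, subst, hTform]
  simp only [extVel]
  linear_combination quadratic_energy_append_eq (fun i j => hg i j x) (b · x) (c x) p.2.1
    (fun ν => α ν p) (fun ν => abar α ν p)

/-- formula (23) of the paper.  For a kinetic energy of the standard
form `T = ½ ∑ g i j q̇ i q̇ j + ∑ b i q̇ i + c` with `g` symmetric, the energy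
`∑ i q̇ i ∂L*/∂q̇ i − L*` of `L* = T* + U` has the explicit expression (23). -/
theorem energy_explicit_formula
    (m k : ℕ) (hm : 1 ≤ m) (hk : 1 ≤ k)
    (g : Fin (m + k) → Fin (m + k) → (Fin (m + k) → ℝ) × ℝ → ℝ)
    (hg : ∀ (i j : Fin (m + k)) (x : (Fin (m + k) → ℝ) × ℝ), g i j x = g j i x)
    (b : Fin (m + k) → (Fin (m + k) → ℝ) × ℝ → ℝ)
    (c : (Fin (m + k) → ℝ) × ℝ → ℝ)
    (U : (Fin (m + k) → ℝ) × ℝ → ℝ)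
    (T : PhasePt (m + k) (m + k) → ℝ)
    (hTform : ∀ p : PhasePt (m + k) (m + k),
      T p = (1 / 2) * (∑ i : Fin (m + k), ∑ j : Fin (m + k),
              g i j (p.1, p.2.2) * p.2.1 i * p.2.1 j)
            + (∑ i : Fin (m + k), b i (p.1, p.2.2) * p.2.1 i) + c (p.1, p.2.2))
    (α : Fin k → PhasePt (m + k) m → ℝ) (hα : ∀ ν, ContDiff ℝ 1 (α ν)) :
    ∀ p : PhasePt (m + k) m,
      (∑ i : Fin m, p.2.1 i * pvOnly (Lag α T U) i p) - Lag α T U p =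
        (1 / 2) * (∑ r : Fin m, ∑ s : Fin m,
            g (Fin.castAdd k r) (Fin.castAdd k s) (p.1, p.2.2) * p.2.1 r * p.2.1 s)
        + (∑ ν : Fin k, ∑ μ : Fin k,
            g (Fin.natAdd m ν) (Fin.natAdd m μ) (p.1, p.2.2)
              * (abar α ν p * α μ p - (1 / 2) * (α ν p * α μ p)))
        + (∑ r : Fin m, ∑ ν : Fin k,
            g (Fin.castAdd k r) (Fin.natAdd m ν) (p.1, p.2.2) * abar α ν p * p.2.1 r)
        + (∑ ν : Fin k, b (Fin.natAdd m ν) (p.1, p.2.2) * (abar α ν p - α ν p))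
        - c (p.1, p.2.2) - U (p.1, p.2.2) :=
  energy_explicit_formula_general m k g hg b c U T hTform α hα
end
end
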